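/- arXiv:2310.16827 — 2 statements merged into one kernel-verified Lean document; each statement's English description precedes it below -/
import Mathlib

section
/- Let M₁ and M₂ be two matroids on common ground set V and let μ(V) be the size of a maximum common independent set. If V' ⊆ V satisfies that for every v ∈ V' the sum of associated densities ρ̃_{M₁}(v) + ρ̃_{M₂}(v) ≤ β (with respect to the density-based decompositions of V' in each matroid), then |V'| ≤ β · μ(V). -/
open Matroid Set ENNReal

namespace MatroidDCS

variable {α : Type*}

/-- The rank of a set in a matroid: supremum of sizes of independent subsets. -/
noncomputable def er (M : Matroid α) (X : Set α) : ℕ∞ :=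
  ⨆ I ∈ {I : Set α | M.Indep I ∧ I ⊆ X}, I.encard

/-- Contraction of a matroid by a set, defined via the dual. -/
noncomputable def contract (M : Matroid α) (C : Set α) : Matroid α := (M✶ ↾ (M.E \ C))✶

/-- A matroid has no loops: every singleton of the ground set is independent. -/
def Loopless (M : Matroid α) : Prop := ∀ v ∈ M.E, M.Indep {v}

/-- Density of a set in a matroid, valued in `ℝ≥0∞` (so `∅` has density 0 and a
nonempty set of rank 0 has density `⊤`). -/
noncomputable def dens (M : Matroid α) (U : Set α) : ℝ≥0∞ :=
  (U.encard : ℝ≥0∞) / (er M U : ℝ≥0∞)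

/-- Union of the first `j` pieces of a decomposition. -/
def pre (U : ℕ → Set α) (j : ℕ) : Set α := ⋃ i ∈ Finset.range j, U i

/-- `W` is the maximum-cardinality densest subset of `M`. -/
def IsMaxDensest (M : Matroid α) (W : Set α) : Prop :=
  W ⊆ M.E ∧ (∀ X ⊆ M.E, dens M X ≤ dens M W) ∧
    ∀ X ⊆ M.E, dens M X = dens M W → X.encard ≤ W.encard

/-- `U 0, …, U (k-1)` is the greedy density-based decomposition of the ground set of `M'`. -/
structure IsDensityDecomp (M' : Matroid α) (k : ℕ) (U : ℕ → Set α) : Prop where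
  cover : pre U k = M'.E
  densest : ∀ j < k, IsMaxDensest (contract M' (pre U j)) (U j)

open Classical in
/-- Associated density of an element `v` with respect to the decomposition `U` of `V'`. -/
noncomputable def assocDens (M : Matroid α) (V' : Set α) (k : ℕ) (U : ℕ → Set α) (v : α) :
    ℝ≥0∞ :=
  if h : ∃ j, j < k ∧ v ∈ M.closure (pre U (j + 1)) then
    dens (contract (M ↾ V') (pre U (Nat.find h))) (U (Nat.find h))
  else 0

/-- Size of a maximum common independent set within `S`. -/
noncomputable def mu (M₁ M₂ : Matroid α) (S : Set α) : ℕ∞ :=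
  ⨆ I ∈ {I : Set α | I ⊆ S ∧ M₁.Indep I ∧ M₂.Indep I}, I.encard



lemma le_er_of_indep {M : Matroid α} {I X : Set α} (hI : M.Indep I) (hIX : I ⊆ X) :
    I.encard ≤ er M X :=
  le_iSup₂ (f := fun I (_ : I ∈ {I : Set α | M.Indep I ∧ I ⊆ X}) => I.encard) I ⟨hI, hIX⟩

lemma er_eq_of_basis' {M : Matroid α} {I X : Set α} (hI : M.IsBasis' I X) :
    er M X = I.encard := by
  refine le_antisymm (iSup₂_le fun J hJ => ?_) (le_er_of_indep hI.indep hI.subset)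
  obtain ⟨K, hK, hJK⟩ := hJ.1.subset_isBasis'_of_subset hJ.2
  exact (encard_le_encard hJK).trans (le_of_eq (hK.encard_eq_encard hI))

lemma exists_basis'_er (M : Matroid α) (X : Set α) : ∃ I, M.IsBasis' I X ∧ er M X = I.encard := by
  obtain ⟨I, hI⟩ := M.exists_isBasis' X
  exact ⟨I, hI, er_eq_of_basis' hI⟩

lemma er_mono (M : Matroid α) {X Y : Set α} (h : X ⊆ Y) : er M X ≤ er M Y :=
  iSup₂_le fun J hJ => le_er_of_indep hJ.1 (hJ.2.trans h)

lemma er_le_encard (M : Matroid α) (X : Set α) : er M X ≤ X.encard :=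
  iSup₂_le fun J hJ => encard_le_encard hJ.2

@[simp] lemma er_empty (M : Matroid α) : er M ∅ = 0 := by
  simpa using er_le_encard M ∅

lemma indep_er_eq {M : Matroid α} {I : Set α} (hI : M.Indep I) : er M I = I.encard :=
  le_antisymm (er_le_encard M I) (le_er_of_indep hI subset_rfl)

lemma indep_of_er_eq {M : Matroid α} {X : Set α} (hX : X.Finite) (h : er M X = X.encard) :
    M.Indep X := by
  obtain ⟨I, hI, hIe⟩ := exists_basis'_er M X
  have : I = X := Set.Finite.eq_of_subset_of_encard_le (hX.subset hI.subset) hI.subset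
    (by rw [← h, hIe])
  exact this ▸ hI.indep

lemma er_closure_eq (M : Matroid α) (X : Set α) (hX : X ⊆ M.E) :
    er M (M.closure X) = er M X := by
  obtain ⟨I, hI⟩ := M.exists_isBasis X hX
  rw [er_eq_of_basis' ((isBasis'_iff_isBasis hX).2 hI),
    er_eq_of_basis' ((isBasis'_iff_isBasis (M.closure_subset_ground X)).2 hI.isBasis_closure_right)]


lemma er_submod (M : Matroid α) {X Y : Set α} (hX : X ⊆ M.E) (hY : Y ⊆ M.E) :
    er M (X ∪ Y) + er M (X ∩ Y) ≤ er M X + er M Y := by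
  obtain ⟨I, hI⟩ := M.exists_isBasis (X ∩ Y) ((inter_subset_left).trans hX)
  obtain ⟨J, hJ, hIJ⟩ := hI.indep.subset_isBasis_of_subset
    (hI.subset.trans (inter_subset_left.trans subset_union_left)) (union_subset hX hY)
  have hJX : M.Indep (J ∩ X) := hJ.indep.subset inter_subset_left
  have hJY : M.Indep (J ∩ Y) := hJ.indep.subset inter_subset_left
  have h1 : (J ∩ X).encard ≤ er M X := le_er_of_indep hJX inter_subset_right
  have h2 : (J ∩ Y).encard ≤ er M Y := le_er_of_indep hJY inter_subset_right
  have hun : (J ∩ X) ∪ (J ∩ Y) = J := by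
    rw [← inter_union_distrib_left, inter_eq_left]; exact hJ.subset
  have hkey : J.encard + I.encard ≤ (J ∩ X).encard + (J ∩ Y).encard := by
    rw [← Set.encard_union_add_encard_inter (J ∩ X) (J ∩ Y), hun]
    refine add_le_add_right (encard_le_encard fun x hx => ?_) _
    exact ⟨⟨hIJ hx, (hI.subset hx).1⟩, ⟨hIJ hx, (hI.subset hx).2⟩⟩
  calc er M (X ∪ Y) + er M (X ∩ Y) = J.encard + I.encard := by
        rw [er_eq_of_basis' ((isBasis'_iff_isBasis (union_subset hX hY)).2 hJ),
          er_eq_of_basis' ((isBasis'_iff_isBasis (inter_subset_left.trans hX)).2 hI)]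
    _ ≤ (J ∩ X).encard + (J ∩ Y).encard := hkey
    _ ≤ er M X + er M Y := add_le_add h1 h2

lemma er_insert_le (M : Matroid α) (X : Set α) (e : α) :
    er M (insert e X) ≤ er M X + 1 := by
  refine iSup₂_le fun J hJ => ?_
  obtain ⟨hJi, hJs⟩ := hJ
  have := le_er_of_indep (hJi.subset (diff_subset (t := {e}))) (by
    intro x hx; rcases hJs hx.1 with h | h
    · exact absurd h hx.2
    · exact h)
  calc J.encard ≤ (J \ {e}).encard + 1 := by
        rcases em (e ∈ J) with h | h
        · rw [Set.encard_diff_singleton_add_one h]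
        · rw [diff_singleton_eq_self h]; exact le_self_add
    _ ≤ er M X + 1 := add_le_add_left this 1

lemma er_insert_loop (M : Matroid α) {X : Set α} {e : α} (he : er M {e} = 0) :
    er M (insert e X) = er M X := by
  refine le_antisymm (iSup₂_le fun J hJ => ?_) (er_mono M (subset_insert e X))
  have heJ : e ∉ J := by
    intro heJ
    have : (1 : ℕ∞) ≤ er M {e} := by
      simpa using le_er_of_indep (hJ.1.subset (singleton_subset_iff.2 heJ)) subset_rfl
    simp [he] at this
  exact le_er_of_indep hJ.1 (fun x hx => (hJ.2 hx).resolve_left (by rintro rfl; exact heJ hx))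

@[simp] lemma contract_ground (M : Matroid α) (C : Set α) : (contract M C).E = M.E \ C := rfl

lemma contract_indep_iff {M : Matroid α} {C : Set α} (hC : C ⊆ M.E) {I : Set α} :
    (contract M C).Indep I ↔
      I ⊆ M.E \ C ∧ ∃ J, M.IsBasis J C ∧ M.Indep (I ∪ J) := by
  rw [contract, dual_indep_iff_exists']
  constructor
  · rintro ⟨hIsub, B, hB, hdisj⟩
    rw [isBase_restrict_iff'] at hB
    rw [isBasis'_iff_isBasis (show M.E \ C ⊆ M✶.E from diff_subset)] at hB
    obtain ⟨B', hB', rfl⟩ := hB.exists_isBase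
    have hbasis := (hB'.inter_isBasis_iff_compl_inter_isBasis_dual
      (X := M.E \ C) (show M.E \ C ⊆ M✶.E from diff_subset)).1 hB
    simp only [dual_dual, dual_ground, diff_diff_cancel_left hC] at hbasis
    refine ⟨hIsub, _, hbasis, (hB'.compl_isBase_of_dual).indep.subset (union_subset ?_
      inter_subset_left)⟩
    intro x hx
    refine ⟨(hIsub hx).1, fun hxB' => ?_⟩
    exact hdisj.ne_of_mem hx ⟨hxB', hIsub hx⟩ rfl
  · rintro ⟨hIsub, J, hJ, hIJ⟩
    obtain ⟨K, hK, hIJK⟩ := hIJ.exists_isBase_superset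
    have hJK : J = K ∩ C :=
      hJ.eq_of_subset_indep (hK.indep.subset inter_subset_left)
        (subset_inter ((subset_union_right).trans hIJK) hJ.subset) inter_subset_right
    have hbasis : M✶.IsBasis ((M.E \ K) ∩ (M.E \ C)) (M.E \ C) :=
      (hK.inter_isBasis_iff_compl_inter_isBasis_dual hC).1 (hJK ▸ hJ)
    refine ⟨hIsub, (M.E \ K) ∩ (M.E \ C), ?_, ?_⟩
    · rw [isBase_restrict_iff' (M := M✶), isBasis'_iff_isBasis (show M.E \ C ⊆ M✶.E from diff_subset)]
      exact hbasis
    · exact Set.disjoint_left.2 fun x hxI ⟨⟨_, hxK⟩, _⟩ =>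
        hxK (hIJK (subset_union_left hxI))

lemma er_contract {M : Matroid α} {C X : Set α} (hC : C ⊆ M.E) (hX : X ⊆ M.E \ C) :
    er (contract M C) X + er M C = er M (X ∪ C) := by
  obtain ⟨J, hJ⟩ := M.exists_isBasis C hC
  have hJe : er M C = J.encard := er_eq_of_basis' ((isBasis'_iff_isBasis hC).2 hJ)
  refine le_antisymm ?_ ?_
  · obtain ⟨I, hI, hIe⟩ := exists_basis'_er (contract M C) X
    obtain ⟨hIsub, J', hJ', hIJ'⟩ := (contract_indep_iff hC).1 hI.indep
    have hdisj : Disjoint I J' := Set.disjoint_left.2 fun x hxI hxJ' =>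
      (hIsub hxI).2 (hJ'.subset hxJ')
    have : (I ∪ J').encard ≤ er M (X ∪ C) :=
      le_er_of_indep hIJ' (union_subset_union hI.subset hJ'.subset)
    rw [Set.encard_union_eq hdisj] at this
    have hJJ' : J.encard = J'.encard := by
      rw [← hJe, er_eq_of_basis' ((isBasis'_iff_isBasis hC).2 hJ')]
    rw [hIe, hJe, hJJ']
    exact this
  · obtain ⟨K, hK, hJK⟩ := hJ.indep.subset_isBasis_of_subset
      (hJ.subset.trans subset_union_right) (union_subset (hX.trans diff_subset) hC)
    have hKC : K ∩ C = J :=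
      (hJ.eq_of_subset_indep (hK.indep.subset inter_subset_left)
        (subset_inter hJK hJ.subset) inter_subset_right).symm
    have hKdiff : (contract M C).Indep (K \ C) := by
      rw [contract_indep_iff hC]
      refine ⟨fun x hx => ⟨hK.indep.subset_ground hx.1, hx.2⟩, J, hJ, ?_⟩
      exact hK.indep.subset (union_subset diff_subset hJK)
    have h1 : (K \ C).encard ≤ er (contract M C) X :=
      le_er_of_indep hKdiff (fun x hx => ((hK.subset hx.1).resolve_right hx.2))
    have h2 : er M (X ∪ C) = (K \ C).encard + J.encard := by
      rw [er_eq_of_basis' ((isBasis'_iff_isBasis (union_subset (hX.trans diff_subset) hC)).2 hK),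
        ← hKC, ← Set.encard_union_eq (disjoint_sdiff_left.mono_right inter_subset_right),
        diff_union_inter]
    rw [h2, hJe]
    exact add_le_add_left h1 _

lemma contract_indep_insert {M : Matroid α} {e : α} {I : Set α} (he : M.Indep {e})
    (hI : (contract M {e}).Indep I) : M.Indep (insert e I) := by
  obtain ⟨hIsub, J, hJ, hIJ⟩ := (contract_indep_iff (singleton_subset_iff.2
    (he.subset_ground rfl))).1 hI
  have hJe : J = {e} := hJ.eq_of_subset_indep he hJ.subset subset_rfl
  rw [hJe, union_singleton] at hIJ
  exact hIJ

lemma er_union_eq_of_subset_closure {M : Matroid α} {X T : Set α} (hX : X ⊆ M.E)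
    (hT : T ⊆ M.closure X) : er M (T ∪ X) = er M X := by
  refine le_antisymm ?_ (er_mono M subset_union_right)
  have : T ∪ X ⊆ M.closure X := union_subset hT (M.subset_closure X hX)
  exact (er_mono M this).trans_eq (er_closure_eq M X hX)

lemma indep_union_of_contract_indep {M : Matroid α} {C I T : Set α}
    (hfinE : M.E.Finite) (hC : C ⊆ M.E) (hI : (contract M C).Indep I) (hT : M.Indep T)
    (hTC : er M (T ∪ C) = er M C) : M.Indep (T ∪ I) := by
  obtain ⟨hIsub, J₀, hJ₀, hIJ₀⟩ := (contract_indep_iff hC).1 hI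
  have hTCE : T ∪ C ⊆ M.E := union_subset hT.subset_ground hC
  obtain ⟨J, hJ, hTJ⟩ := hT.subset_isBasis_of_subset subset_union_left hTCE
  have hJcl : M.closure J = M.closure (T ∪ C) := hJ.closure_eq_closure
  have hJIE : J ∪ I ⊆ M.E :=
    union_subset (hJ.indep.subset_ground) (hIsub.trans diff_subset)
  have hJe : J.encard = er M C := by
    rw [← hTC, er_eq_of_basis' ((isBasis'_iff_isBasis hTCE).2 hJ)]
  have hJ₀e : J₀.encard = er M C :=
    (er_eq_of_basis' ((isBasis'_iff_isBasis hC).2 hJ₀)).symm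
  have hdisj : Disjoint I J₀ := Set.disjoint_left.2 fun x hxI hxJ₀ =>
    (hIsub hxI).2 (hJ₀.subset hxJ₀)
  have hsub : I ∪ C ⊆ M.closure (J ∪ I) := by
    refine union_subset ?_ ?_
    · exact subset_union_right.trans (M.subset_closure (J ∪ I) hJIE)
    · calc C ⊆ M.closure (T ∪ C) := subset_union_right.trans (M.subset_closure _ hTCE)
        _ = M.closure J := hJcl.symm
        _ ⊆ M.closure (J ∪ I) := M.closure_subset_closure subset_union_left
  have hchain : (J ∪ I).encard ≤ er M (J ∪ I) := by
    calc (J ∪ I).encard ≤ J.encard + I.encard := Set.encard_union_le J I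
      _ = J₀.encard + I.encard := by rw [hJe, hJ₀e]
      _ = (I ∪ J₀).encard := by rw [Set.encard_union_eq hdisj, add_comm]
      _ ≤ er M (I ∪ C) := le_er_of_indep hIJ₀ (union_subset_union_right I hJ₀.subset)
      _ ≤ er M (M.closure (J ∪ I)) := er_mono M hsub
      _ = er M (J ∪ I) := er_closure_eq M _ hJIE
  have hind : M.Indep (J ∪ I) :=
    indep_of_er_eq (hfinE.subset hJIE) (le_antisymm (er_le_encard _ _) hchain)
  exact hind.subset (union_subset_union_left I hTJ)

lemma er_restrict (M : Matroid α) {R X : Set α} (hX : X ⊆ R) : er (M ↾ R) X = er M X := by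
  refine le_antisymm (iSup₂_le fun J hJ => le_er_of_indep hJ.1.of_restrict hJ.2)
    (iSup₂_le fun J hJ => le_er_of_indep (restrict_indep_iff.2 ⟨hJ.1, hJ.2.trans hX⟩) hJ.2)

lemma er_singleton_eq_one {M : Matroid α} {e : α} (he : e ∈ M.E) (hne : er M {e} ≠ 0) :
    er M {e} = 1 :=
  le_antisymm (by simpa using er_le_encard M {e}) (ENat.one_le_iff_ne_zero.2 hne)

lemma indep_singleton_of_er {M : Matroid α} {e : α} (h : er M {e} = 1) : M.Indep {e} :=
  indep_of_er_eq (finite_singleton e) (by rw [h, encard_singleton])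

theorem edmonds (M N : Matroid α) (hfin : M.E.Finite) (hE : N.E = M.E) :
    ∃ I A, A ⊆ M.E ∧ M.Indep I ∧ N.Indep I ∧ er M A + er N (M.E \ A) ≤ I.encard := by
  obtain ⟨n, hn⟩ : ∃ n, M.E.ncard ≤ n := ⟨M.E.ncard, le_rfl⟩
  induction n generalizing M N with
  | zero =>
    have hempty : M.E = ∅ := (Set.ncard_eq_zero hfin).1 (Nat.le_zero.1 hn)
    exact ⟨∅, ∅, empty_subset _, M.empty_indep, N.empty_indep, by
      simp [hempty, er_empty]⟩
  | succ n ih =>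
    rcases eq_empty_or_nonempty M.E with hempty | ⟨e, he⟩
    · exact ⟨∅, ∅, empty_subset _, M.empty_indep, N.empty_indep, by
        simp [hempty, er_empty]⟩
    set E := M.E with hEdef
    set D := M.E \ {e} with hDdef
    have heN : e ∈ N.E := by rw [hE]; exact he
    have hDfin : D.Finite := hfin.subset diff_subset
    have hDcard : D.ncard ≤ n := by
      have := Set.ncard_diff_singleton_lt_of_mem he hfin
      show (E \ {e}).ncard ≤ n
      omega
    have hDE : D ⊆ E := diff_subset
    -- deletion
    obtain ⟨I₁, A₁, hA₁, hI₁M, hI₁N, hb₁⟩ :=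
      ih (M ↾ D) (N ↾ D) (by rwa [restrict_ground_eq]) (by rw [restrict_ground_eq,
        restrict_ground_eq]) (by rwa [restrict_ground_eq])
    rw [restrict_ground_eq] at hA₁ hb₁
    rw [restrict_indep_iff] at hI₁M hI₁N
    obtain ⟨hI₁M, hI₁D⟩ := hI₁M
    have hI₁N := hI₁N.1
    rw [er_restrict M hA₁, er_restrict N diff_subset] at hb₁
    have heA₁ : e ∉ A₁ := fun h => (hA₁ h).2 rfl
    by_cases hloopM : er M {e} = 0
    · refine ⟨I₁, insert e A₁, insert_subset he (hA₁.trans hDE), hI₁M, hI₁N, ?_⟩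
      have hset : E \ insert e A₁ = D \ A₁ := by
        rw [hDdef, diff_diff, singleton_union]
      rw [er_insert_loop M hloopM, hset]
      exact hb₁
    by_cases hloopN : er N {e} = 0
    · refine ⟨I₁, A₁, hA₁.trans hDE, hI₁M, hI₁N, ?_⟩
      have hset : E \ A₁ = insert e (D \ A₁) := by
        rw [hDdef]
        ext x
        simp only [mem_diff, mem_insert_iff, mem_singleton_iff]
        constructor
        · rintro ⟨hxE, hxA⟩
          by_cases hxe : x = e
          · exact Or.inl hxe
          · exact Or.inr ⟨⟨hxE, hxe⟩, hxA⟩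
        · rintro (rfl | ⟨⟨hxE, _⟩, hxA⟩)
          · exact ⟨he, heA₁⟩
          · exact ⟨hxE, hxA⟩
      rw [hset, er_insert_loop N hloopN]
      exact hb₁
    -- contraction
    have h1M : er M {e} = 1 := er_singleton_eq_one he hloopM
    have h1N : er N {e} = 1 := er_singleton_eq_one heN hloopN
    have heIM : M.Indep {e} := indep_singleton_of_er h1M
    have heIN : N.Indep {e} := indep_singleton_of_er h1N
    have hMcE : (contract M {e}).E = D := by rw [contract_ground]
    have hNcE : (contract N {e}).E = D := by rw [contract_ground, hE]
    obtain ⟨I₂, A₂, hA₂, hI₂M, hI₂N, hb₂⟩ :=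
      ih (contract M {e}) (contract N {e}) (by rwa [hMcE]) (by rw [hMcE, hNcE])
        (by rwa [hMcE])
    rw [hMcE] at hA₂ hb₂
    have heA₂ : e ∉ A₂ := fun h => (hA₂ h).2 rfl
    have hI₂D : I₂ ⊆ D := hMcE ▸ hI₂M.subset_ground
    have heI₂ : e ∉ I₂ := fun h => (hI₂D h).2 rfl
    have hI₂M' : M.Indep (insert e I₂) := contract_indep_insert heIM hI₂M
    have hI₂N' : N.Indep (insert e I₂) := contract_indep_insert heIN hI₂N
    have hI₂card : (insert e I₂).encard = I₂.encard + 1 := encard_insert_of_notMem heI₂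
    -- rank transfer
    have hMc : er (contract M {e}) A₂ + 1 = er M (insert e A₂) := by
      have := er_contract (M := M) (C := {e}) (X := A₂)
        (singleton_subset_iff.2 he) hA₂
      rwa [h1M, union_singleton] at this
    have hNc : er (contract N {e}) (D \ A₂) + 1 = er N (E \ A₂) := by
      have := er_contract (M := N) (C := {e}) (X := D \ A₂)
        (singleton_subset_iff.2 heN) (by rw [hE, hDdef]; exact fun x hx => ⟨(hx.1).1, hx.1.2⟩)
      rw [h1N, union_singleton] at this
      have hset : insert e (D \ A₂) = E \ A₂ := by
        ext x
        simp only [mem_insert_iff, mem_diff, mem_singleton_iff, hDdef]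
        constructor
        · rintro (rfl | ⟨⟨hxE, _⟩, hxA⟩)
          · exact ⟨he, heA₂⟩
          · exact ⟨hxE, hxA⟩
        · rintro ⟨hxE, hxA⟩
          by_cases hxe : x = e
          · exact Or.inl hxe
          · exact Or.inr ⟨⟨hxE, hxe⟩, hxA⟩
      rwa [hset] at this
    have hb₂' : er M (insert e A₂) + er N (E \ A₂) ≤ I₂.encard + 2 := by
      rw [← hMc, ← hNc]
      calc er (contract M {e}) A₂ + 1 + (er (contract N {e}) (D \ A₂) + 1)
          = er (contract M {e}) A₂ + er (contract N {e}) (D \ A₂) + 2 := by ring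
        _ ≤ I₂.encard + 2 := by exact add_le_add_left hb₂ 2
    have hb₁' : er M A₁ + er N (E \ insert e A₁) ≤ I₁.encard := by
      have hset : E \ insert e A₁ = D \ A₁ := by rw [hDdef, diff_diff, singleton_union]
      rw [hset]; exact hb₁
    -- submodular combination
    set P := A₁ ∩ A₂ with hP
    set Q := insert e (A₁ ∪ A₂) with hQ
    have hPE : P ⊆ E := inter_subset_left.trans (hA₁.trans hDE)
    have hQE : Q ⊆ E := insert_subset he (union_subset (hA₁.trans hDE) (hA₂.trans hDE))
    have hsubM : er M Q + er M P ≤ er M A₁ + er M (insert e A₂) := by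
      have := er_submod M (hA₁.trans hDE) (insert_subset he (hA₂.trans hDE))
      have h₁ : A₁ ∪ insert e A₂ = Q := by rw [hQ, union_insert]
      have h₂ : A₁ ∩ insert e A₂ = P := by
        rw [hP]; ext x
        simp only [mem_inter_iff, mem_insert_iff]
        constructor
        · rintro ⟨hx₁, rfl | hx₂⟩
          · exact absurd hx₁ heA₁
          · exact ⟨hx₁, hx₂⟩
        · rintro ⟨hx₁, hx₂⟩; exact ⟨hx₁, Or.inr hx₂⟩
      rwa [h₁, h₂] at this
    have hsubN : er N (E \ P) + er N (E \ Q) ≤ er N (E \ insert e A₁) + er N (E \ A₂) := by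
      have := er_submod N (X := E \ insert e A₁) (Y := E \ A₂)
        (by rw [hE]; exact diff_subset) (by rw [hE]; exact diff_subset)
      have h₁ : (E \ insert e A₁) ∪ (E \ A₂) = E \ P := by
        rw [← diff_inter, hP]
        congr 1
        ext x
        simp only [mem_inter_iff, mem_insert_iff]
        constructor
        · rintro ⟨rfl | hx₁, hx₂⟩
          · exact absurd hx₂ heA₂
          · exact ⟨hx₁, hx₂⟩
        · rintro ⟨hx₁, hx₂⟩; exact ⟨Or.inr hx₁, hx₂⟩
      have h₂ : (E \ insert e A₁) ∩ (E \ A₂) = E \ Q := by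
        rw [diff_inter_diff, hQ, insert_union]
      rwa [h₁, h₂] at this
    have hcomb : (er M P + er N (E \ P)) + (er M Q + er N (E \ Q)) ≤
        I₁.encard + (insert e I₂).encard + 1 := by
      calc (er M P + er N (E \ P)) + (er M Q + er N (E \ Q))
          = (er M Q + er M P) + (er N (E \ P) + er N (E \ Q)) := by ring
        _ ≤ (er M A₁ + er M (insert e A₂)) + (er N (E \ insert e A₁) + er N (E \ A₂)) :=
            add_le_add hsubM hsubN
        _ = (er M A₁ + er N (E \ insert e A₁)) + (er M (insert e A₂) + er N (E \ A₂)) := by ring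
        _ ≤ I₁.encard + (I₂.encard + 2) := add_le_add hb₁' hb₂'
        _ = I₁.encard + (insert e I₂).encard + 1 := by rw [hI₂card]; ring
    -- choose the winner
    have hI₁fin : I₁.encard ≠ ⊤ := ((hfin.subset (hI₁D.trans hDE)).encard_lt_top).ne
    have hI₂fin : (insert e I₂).encard ≠ ⊤ :=
      ((hfin.subset (insert_subset he (hI₂D.trans hDE))).encard_lt_top).ne
    by_cases hc₁ : er M P + er N (E \ P) ≤ I₁.encard
    · exact ⟨I₁, P, hPE, hI₁M, hI₁N, hc₁⟩
    by_cases hc₂ : er M P + er N (E \ P) ≤ (insert e I₂).encard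
    · exact ⟨insert e I₂, P, hPE, hI₂M', hI₂N', hc₂⟩
    by_cases hc₃ : er M Q + er N (E \ Q) ≤ I₁.encard
    · exact ⟨I₁, Q, hQE, hI₁M, hI₁N, hc₃⟩
    by_cases hc₄ : er M Q + er N (E \ Q) ≤ (insert e I₂).encard
    · exact ⟨insert e I₂, Q, hQE, hI₂M', hI₂N', hc₄⟩
    exfalso
    push_neg at hc₂ hc₃
    have h₁ : (insert e I₂).encard + 1 ≤ er M P + er N (E \ P) :=
      ENat.add_one_le_iff hI₂fin |>.2 hc₂
    have h₂ : I₁.encard + 1 ≤ er M Q + er N (E \ Q) :=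
      ENat.add_one_le_iff hI₁fin |>.2 hc₃
    have hkey : I₁.encard + (insert e I₂).encard + 2 ≤ I₁.encard + (insert e I₂).encard + 1 := by
      calc I₁.encard + (insert e I₂).encard + 2
          = ((insert e I₂).encard + 1) + (I₁.encard + 1) := by ring
        _ ≤ (er M P + er N (E \ P)) + (er M Q + er N (E \ Q)) := add_le_add h₁ h₂
        _ ≤ I₁.encard + (insert e I₂).encard + 1 := hcomb
    have hS : I₁.encard + (insert e I₂).encard ≠ (⊤ : ℕ∞) :=
      WithTop.add_ne_top.2 ⟨hI₁fin, hI₂fin⟩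
    have h2le1 : (2 : ℕ∞) ≤ 1 := (WithTop.add_le_add_iff_left hS).1 hkey
    norm_num at h2le1

@[simp] lemma pre_zero (U : ℕ → Set α) : pre U 0 = ∅ := by simp [pre]

lemma pre_succ (U : ℕ → Set α) (j : ℕ) : pre U (j + 1) = U j ∪ pre U j := by
  simp [pre, Finset.range_add_one]

lemma pre_mono (U : ℕ → Set α) {i j : ℕ} (h : i ≤ j) : pre U i ⊆ pre U j := by
  intro x hx
  simp only [pre, mem_iUnion, Finset.mem_range, exists_prop] at hx ⊢
  obtain ⟨i', hi', hx⟩ := hx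
  exact ⟨i', lt_of_lt_of_le hi' h, hx⟩

lemma encard_biUnion_range {S : ℕ → Set α} (k : ℕ)
    (hdisj : ∀ i j, i < j → Disjoint (S i) (S j)) :
    (⋃ i ∈ Finset.range k, S i).encard = ∑ i ∈ Finset.range k, (S i).encard := by
  induction k with
  | zero => simp
  | succ k ih =>
    rw [Finset.range_add_one, Finset.set_biUnion_insert, Finset.sum_insert (by simp),
      Set.encard_union_eq, ih]
    exact Set.disjoint_iUnion₂_right.2 fun i hi =>
      (hdisj i k (Finset.mem_range.1 hi)).symm

lemma not_mem_closure_empty {M : Matroid α} {v : α} (hv : M.Indep {v}) :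
    v ∉ M.closure ∅ := by
  intro hmem
  have h1 : er M {v} ≤ er M (M.closure ∅) := er_mono M (singleton_subset_iff.2 hmem)
  rw [er_closure_eq M ∅ (empty_subset _), er_empty] at h1
  have := indep_er_eq hv
  rw [encard_singleton] at this
  rw [this] at h1
  simp at h1

open Classical in
lemma assocDens_eq {M : Matroid α} {V' : Set α} {k : ℕ} {U : ℕ → Set α} {v : α} {j : ℕ}
    (hj : j < k) (hcl : v ∈ M.closure (pre U (j + 1)))
    (hncl : v ∉ M.closure (pre U j)) :
    assocDens M V' k U v = dens (contract (M ↾ V') (pre U j)) (U j) := by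
  have hex : ∃ i, i < k ∧ v ∈ M.closure (pre U (i + 1)) := ⟨j, hj, hcl⟩
  unfold assocDens
  rw [dif_pos hex]
  have hfind : Nat.find hex = j := by
    rw [Nat.find_eq_iff]
    refine ⟨⟨hj, hcl⟩, fun m hm hP => ?_⟩
    exact hncl (M.closure_subset_closure (pre_mono U (Nat.succ_le_of_lt hm)) hP.2)
  rw [hfind]


lemma main_bound (M : Matroid α) (hfin : M.E.Finite) (hM : Loopless M) {V' : Set α}
    (hV' : V' ⊆ M.E) {k : ℕ} {U : ℕ → Set α} (hd : IsDensityDecomp (M ↾ V') k U) (β : ℕ)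
    (hb : ∀ v ∈ V', assocDens M V' k U v ≤ (β : ℝ≥0∞)) {A : Set α} (hA : A ⊆ V') :
    (A.encard : ℝ≥0∞) ≤ (β : ℝ≥0∞) * (er (M ↾ V') A : ℝ≥0∞) := by
  have hFE : (M ↾ V').E = V' := restrict_ground_eq
  have hcover : pre U k = V' := by rw [hd.cover, hFE]
  have hfinV : V'.Finite := hfin.subset hV'
  -- pieces live in the contracted ground sets
  have hUsub : ∀ j < k, U j ⊆ V' \ pre U j := fun j hj => by
    have := (hd.densest j hj).1
    rwa [contract_ground, hFE] at this
  have hpre : ∀ j, j ≤ k → pre U j ⊆ V' := by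
    intro j hj
    induction j with
    | zero => simp
    | succ j ih =>
      rw [pre_succ]
      exact union_subset ((hUsub j hj).trans diff_subset) (ih (Nat.le_of_succ_le hj))
  -- the classes
  set cls : ℕ → Set α := fun j => (V' ∩ M.closure (pre U (j + 1))) \ M.closure (pre U j)
    with hclsdef
  have hcls_disj : ∀ i j, i < j → Disjoint (A ∩ cls i) (A ∩ cls j) := by
    intro i j hij
    refine Set.disjoint_left.2 fun x hxi hxj => ?_
    exact hxj.2.2 (M.closure_subset_closure (pre_mono U (Nat.succ_le_of_lt hij)) hxi.2.1.2)
  have hcls_cover : ∀ v ∈ V', ∃ j < k, v ∈ cls j := by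
    intro v hv
    have hk : 0 < k := by
      rcases Nat.eq_zero_or_pos k with rfl | hk
      · rw [pre_zero] at hcover; rw [← hcover] at hv; exact absurd hv (notMem_empty v)
      · exact hk
    have hvk : v ∈ M.closure (pre U ((k - 1) + 1)) := by
      have hkk : k - 1 + 1 = k := by omega
      rw [hkk]
      exact M.subset_closure (pre U k) (hcover ▸ hV') (hcover ▸ hv)
    have hex : ∃ j, v ∈ M.closure (pre U (j + 1)) := ⟨k - 1, hvk⟩
    classical
    set j₀ := Nat.find hex with hj₀def
    have hj₀k : j₀ < k := lt_of_le_of_lt (Nat.find_le hvk) (by omega)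
    refine ⟨j₀, hj₀k, ⟨⟨hv, Nat.find_spec hex⟩, ?_⟩⟩
    rcases Nat.eq_zero_or_pos j₀ with hz | hpos
    · rw [hz, pre_zero]
      exact not_mem_closure_empty (hM v (hV' hv))
    · have hmin := Nat.find_min hex (m := j₀ - 1) (by omega)
      have hjj : j₀ - 1 + 1 = j₀ := by omega
      rwa [hjj] at hmin
  -- decomposition of the cardinality of A
  have hAunion : A = ⋃ j ∈ Finset.range k, (A ∩ cls j) := by
    ext x
    simp only [mem_iUnion, Finset.mem_range, exists_prop]
    constructor
    · intro hx
      obtain ⟨j, hj, hcls⟩ := hcls_cover x (hA hx)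
      exact ⟨j, hj, hx, hcls⟩
    · rintro ⟨j, _, hx, _⟩; exact hx
  have hcard : A.encard = ∑ j ∈ Finset.range k, (A ∩ cls j).encard := by
    have h := encard_biUnion_range k hcls_disj
    rw [← hAunion] at h
    exact h
  -- per-class cardinality bound
  have hclass : ∀ j, j < k → ((A ∩ cls j).encard : ℝ≥0∞) ≤
      (β : ℝ≥0∞) * (er (contract (M ↾ V') (pre U j)) (A ∩ cls j) : ℝ≥0∞) := by
    intro j hj
    rcases eq_empty_or_nonempty (A ∩ cls j) with hemp | ⟨v, hv⟩
    · simp [hemp]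
    have hvV : v ∈ V' := hA hv.1
    have hvd : assocDens M V' k U v = dens (contract (M ↾ V') (pre U j)) (U j) :=
      assocDens_eq hj hv.2.1.2 hv.2.2
    have hUd : dens (contract (M ↾ V') (pre U j)) (U j) ≤ (β : ℝ≥0∞) := by
      rw [← hvd]; exact hb v hvV
    have hsubg : A ∩ cls j ⊆ (contract (M ↾ V') (pre U j)).E := by
      rw [contract_ground, hFE]
      intro x hx
      exact ⟨hx.2.1.1, fun hxp => hx.2.2 (M.subset_closure (pre U j)
        ((hpre j hj.le).trans hV') hxp)⟩
    have hX : dens (contract (M ↾ V') (pre U j)) (A ∩ cls j) ≤ (β : ℝ≥0∞) :=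
      le_trans ((hd.densest j hj).2.1 _ hsubg) hUd
    set N := contract (M ↾ V') (pre U j)
    set X := A ∩ cls j
    have herfin : er N X ≠ ⊤ := by
      have := (er_le_encard N X).trans (encard_le_encard (inter_subset_left.trans hA))
      exact fun h => by
        rw [h] at this
        exact absurd (le_antisymm le_top (this.trans (le_top))) (by
          simpa using (lt_of_le_of_lt this hfinV.encard_lt_top).ne)
    rcases eq_or_ne (er N X) 0 with hz | hnz
    · rw [dens, hz] at hX
      simp only [ENat.toENNReal_zero] at hX
      rcases eq_or_ne (X.encard : ℝ≥0∞) 0 with h0 | h0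
      · rw [h0]; exact zero_le
      · rw [ENNReal.div_zero h0] at hX
        exact absurd (le_antisymm hX le_top).symm (ENNReal.natCast_ne_top β)
    · rw [dens, ENNReal.div_le_iff_le_mul (Or.inl (by exact_mod_cast hnz))
        (Or.inl (fun h => herfin (by rwa [← ENat.toENNReal_top, ENat.toENNReal_inj] at h)))] at hX
      exact hX
  -- stacking independent sets
  have hstack : ∑ j ∈ Finset.range k, er (contract (M ↾ V') (pre U j)) (A ∩ cls j) ≤
      er (M ↾ V') A := by
    choose I hI hIe using fun j => exists_basis'_er (contract (M ↾ V') (pre U j)) (A ∩ cls j)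
    have hIsub : ∀ j, I j ⊆ A ∩ cls j := fun j => (hI j).subset
    have hFfin : (M ↾ V').E.Finite := by rw [hFE]; exact hfinV
    have hindep : ∀ j, j ≤ k → (M ↾ V').Indep (pre I j) := by
      intro j hj
      induction j with
      | zero => rw [pre_zero]; exact (M ↾ V').empty_indep
      | succ j ih =>
        rw [pre_succ]
        have hTsub : pre I j ⊆ M.closure (pre U j) := by
          intro x hx
          simp only [pre, mem_iUnion, Finset.mem_range, exists_prop] at hx
          obtain ⟨i, hi, hx⟩ := hx
          exact M.closure_subset_closure (pre_mono U (Nat.succ_le_of_lt hi))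
            ((hIsub i hx).2.1.2)
        have hpreU : pre U j ⊆ (M ↾ V').E := by rw [hFE]; exact hpre j (by omega)
        have hT : (M ↾ V').Indep (pre I j) := ih (by omega)
        have hTC : er (M ↾ V') (pre I j ∪ pre U j) = er (M ↾ V') (pre U j) := by
          have hcl : V' ∩ M.closure (pre U j) ⊆ V' := inter_subset_left
          have h1 : pre I j ⊆ V' := hT.subset_ground.trans_eq hFE
          rw [er_restrict M (union_subset h1 (hpre j (by omega))),
            er_restrict M (hpre j (by omega))]
          exact er_union_eq_of_subset_closure ((hpre j (by omega)).trans hV') hTsub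
        rw [union_comm]
        exact indep_union_of_contract_indep hFfin hpreU ((hI j).indep) hT hTC
    have hTk : (pre I k).encard ≤ er (M ↾ V') A := by
      refine le_er_of_indep (hindep k le_rfl) ?_
      intro x hx
      simp only [pre, mem_iUnion, Finset.mem_range, exists_prop] at hx
      obtain ⟨i, _, hx⟩ := hx
      exact (hIsub i hx).1
    have hTcard : (pre I k).encard = ∑ j ∈ Finset.range k, (I j).encard := by
      refine encard_biUnion_range k fun i j hij => ?_
      exact (hcls_disj i j hij).mono (hIsub i) (hIsub j)
    calc ∑ j ∈ Finset.range k, er (contract (M ↾ V') (pre U j)) (A ∩ cls j)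
        = ∑ j ∈ Finset.range k, (I j).encard := Finset.sum_congr rfl fun j _ => hIe j
      _ = (pre I k).encard := hTcard.symm
      _ ≤ er (M ↾ V') A := hTk
  -- put everything together
  calc (A.encard : ℝ≥0∞)
      = ∑ j ∈ Finset.range k, ((A ∩ cls j).encard : ℝ≥0∞) := by
        rw [hcard]
        exact map_sum ENat.toENNRealRingHom _ _
    _ ≤ ∑ j ∈ Finset.range k,
        (β : ℝ≥0∞) * (er (contract (M ↾ V') (pre U j)) (A ∩ cls j) : ℝ≥0∞) :=
        Finset.sum_le_sum fun j hj => hclass j (Finset.mem_range.1 hj)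
    _ = (β : ℝ≥0∞) * ∑ j ∈ Finset.range k,
        (er (contract (M ↾ V') (pre U j)) (A ∩ cls j) : ℝ≥0∞) := by
        rw [Finset.mul_sum]
    _ ≤ (β : ℝ≥0∞) * (er (M ↾ V') A : ℝ≥0∞) := by
        refine mul_le_mul_right ?_ _
        calc (∑ j ∈ Finset.range k,
            (er (contract (M ↾ V') (pre U j)) (A ∩ cls j) : ℝ≥0∞))
            = ((∑ j ∈ Finset.range k,
              er (contract (M ↾ V') (pre U j)) (A ∩ cls j) : ℕ∞) : ℝ≥0∞) :=
              (map_sum ENat.toENNRealRingHom _ _).symm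
          _ ≤ (er (M ↾ V') A : ℝ≥0∞) := ENat.toENNReal_le.2 hstack


/-- a set whose elements all have sum of associated densities at most `β`
has size at most `β · μ(V)`. -/
theorem encard_le_of_bounded_density (M₁ M₂ : Matroid α) [M₁.Finite] (hE : M₁.E = M₂.E)
    (hM₁ : Loopless M₁) (hM₂ : Loopless M₂)
    (V' : Set α) (hV' : V' ⊆ M₁.E) (k : ℕ) (U₁ U₂ : ℕ → Set α)
    (hd₁ : IsDensityDecomp (M₁ ↾ V') k U₁) (hd₂ : IsDensityDecomp (M₂ ↾ V') k U₂)
    (β : ℕ)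
    (hβ : ∀ v ∈ V',
      assocDens M₁ V' k U₁ v + assocDens M₂ V' k U₂ v ≤ (β : ℝ≥0∞)) :
    (V'.encard : ℝ≥0∞) ≤ (β : ℝ≥0∞) * (mu M₁ M₂ M₁.E : ℝ≥0∞) := by
  have hfinE : M₁.E.Finite := M₁.ground_finite
  have hfinV : V'.Finite := hfinE.subset hV'
  have hV₂ : V' ⊆ M₂.E := hE ▸ hV'
  obtain ⟨I, A, hA, hIF, hIG, hbound⟩ := edmonds (M₁ ↾ V') (M₂ ↾ V')
    (by rw [restrict_ground_eq]; exact hfinV) (by rw [restrict_ground_eq, restrict_ground_eq])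
  rw [restrict_ground_eq] at hA hbound
  have hb₁ : ∀ v ∈ V', assocDens M₁ V' k U₁ v ≤ (β : ℝ≥0∞) := fun v hv =>
    le_trans le_self_add (hβ v hv)
  have hb₂ : ∀ v ∈ V', assocDens M₂ V' k U₂ v ≤ (β : ℝ≥0∞) := fun v hv =>
    le_trans le_add_self (hβ v hv)
  have h₁ := main_bound M₁ hfinE hM₁ hV' hd₁ β hb₁ hA
  have h₂ := main_bound M₂ (hE ▸ hfinE) hM₂ hV₂ hd₂ β hb₂
    (diff_subset : V' \ A ⊆ V')
  have hIV : I ⊆ V' := hIF.subset_ground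
  have hmem : I ∈ {I : Set α | I ⊆ M₁.E ∧ M₁.Indep I ∧ M₂.Indep I} :=
    ⟨hIV.trans hV', hIF.of_restrict, hIG.of_restrict⟩
  have hmu : I.encard ≤ mu M₁ M₂ M₁.E :=
    le_iSup₂ (f := fun (J : Set α)
      (_ : J ∈ {I : Set α | I ⊆ M₁.E ∧ M₁.Indep I ∧ M₂.Indep I}) => J.encard) I hmem
  calc (V'.encard : ℝ≥0∞)
      = ((V' \ A).encard : ℝ≥0∞) + (A.encard : ℝ≥0∞) := by
        rw [← ENat.toENNReal_add, Set.encard_diff_add_encard_of_subset hA]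
    _ ≤ (β : ℝ≥0∞) * (er (M₂ ↾ V') (V' \ A) : ℝ≥0∞) +
        (β : ℝ≥0∞) * (er (M₁ ↾ V') A : ℝ≥0∞) := add_le_add h₂ h₁
    _ = (β : ℝ≥0∞) * ((er (M₁ ↾ V') A : ℝ≥0∞) + (er (M₂ ↾ V') (V' \ A) : ℝ≥0∞)) := by
        rw [mul_add, add_comm]
    _ ≤ (β : ℝ≥0∞) * (I.encard : ℝ≥0∞) := by
        refine mul_le_mul_right ?_ _
        rw [← ENat.toENNReal_add]
        exact ENat.toENNReal_le.2 hbound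
    _ ≤ (β : ℝ≥0∞) * (mu M₁ M₂ M₁.E : ℝ≥0∞) :=
        mul_le_mul_right (ENat.toENNReal_le.2 hmu) _

end MatroidDCS
end

section
/- Let M₁, M₂ be matroids on V, let C₁, C₂ partition a subset W ⊆ V, and let S ⊆ V \ W be built greedily so that each added element o satisfies o ∉ span_{M₁/S}(C₁) ∪ span_{M₂/S}(C₂) at the time of addition, until no further element of an optimal common independent set O can be added. Then O \ S is a common independent set of M₁/S and M₂/S contained in span_{M₁/S}(C₁) ∪ span_{M₂/S}(C₂), and |O \ S| ≤ rank_{M₁}(C₁) + rank_{M₂}(C₂). -/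
open Matroid Set ENNReal

namespace MatroidDCS

variable {α : Type*}

/-- A base contained in `X` is a `Basis'` of `X`. -/
lemma base_basis'_of_subset {M : Matroid α} {B X : Set α} (hB : M.IsBase B) (hBX : B ⊆ X) :
    M.IsBasis' B X :=
  ⟨⟨hB.indep, hBX⟩, fun J hJ hBJ => (hB.eq_of_subset_indep hJ.1 hBJ).symm.subset⟩

/-- Independence in the contraction, from independence of the union. -/
lemma contract_indep_of {M : Matroid α} {I C : Set α} (hIC : M.Indep (I ∪ C))
    (hdj : Disjoint I C) : (contract M C).Indep I := by
  obtain ⟨B', hB', hIB'⟩ := hIC.exists_isBase_superset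
  have hCB' : C ⊆ B' := subset_union_right.trans hIB'
  have hBdual : M✶.IsBase (M.E \ B') := hB'.compl_isBase_dual
  have hBsub : M.E \ B' ⊆ M.E \ C := diff_subset_diff_right hCB'
  have hbase : (M✶ ↾ (M.E \ C)).IsBase (M.E \ B') :=
    (Matroid.isBase_restrict_iff').mpr (base_basis'_of_subset hBdual hBsub)
  refine (Matroid.dual_indep_iff_exists' ).mpr ⟨?_, ⟨M.E \ B', hbase, ?_⟩⟩
  · exact subset_diff.mpr ⟨(subset_union_left.trans hIC.subset_ground), hdj⟩
  · exact disjoint_sdiff_right.mono_left (subset_union_left.trans hIB')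

/-- Independence in the contraction implies independence in the original matroid. -/
lemma indep_of_contract_indep {M : Matroid α} {I C : Set α}
    (hI : (contract M C).Indep I) : M.Indep I := by
  obtain ⟨hIE, B, hB, hdj⟩ := (Matroid.dual_indep_iff_exists').mp hI
  have hB' : M✶.IsBasis' B (M.E \ C) := Matroid.isBase_restrict_iff'.mp hB
  obtain ⟨Bh, hBh, hBBh⟩ := hB'.indep.exists_isBase_superset
  have hinter : Bh ∩ (M.E \ C) = B := by
    refine (hB'.eq_of_subset_indep (hBh.indep.subset inter_subset_left)
      (subset_inter hBBh hB'.1.2) inter_subset_right).symm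
  have hIE' : I ⊆ M.E \ C := hIE
  have hIBh : Disjoint I Bh := by
    rw [disjoint_iff_inter_eq_empty]
    have h1 : I ∩ Bh = I ∩ B := by
      rw [← hinter]
      ext x
      exact ⟨fun hx => ⟨hx.1, hx.2, hIE' hx.1⟩, fun hx => ⟨hx.1, hx.2.1⟩⟩
    rw [h1, ← disjoint_iff_inter_eq_empty]
    exact hdj
  exact hBh.compl_isBase_of_dual.indep.subset
    (subset_diff.mpr ⟨hIE'.trans diff_subset, hIBh⟩)

/-- An independent set contained in the closure of an independent set `J` has size at
most that of `J`. -/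
lemma encard_le_of_indep_subset_closure {M : Matroid α} {A J : Set α} (hA : M.Indep A)
    (hJ : M.Indep J) (hAJ : A ⊆ M.closure J) : A.encard ≤ J.encard := by
  have hJb : M.IsBasis J (J ∪ A) := Matroid.isBasis_union_iff_indep_closure.mpr ⟨hJ, hAJ⟩
  obtain ⟨A', hA', hAA'⟩ := hA.subset_isBasis'_of_subset (subset_union_right (s := J))
  exact (Set.encard_mono hAA').trans (hA'.encard_eq_encard hJb.isBasis').le

/-- Any independent subset of `X` has size at most `er M X`. -/
lemma encard_le_er {M : Matroid α} {J X : Set α} (hJ : M.Indep J) (hJX : J ⊆ X) :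
    J.encard ≤ er M X :=
  le_iSup₂ (f := fun (I : Set α) (_ : I ∈ {I : Set α | M.Indep I ∧ I ⊆ X}) => I.encard)
    J ⟨hJ, hJX⟩

/-- after the greedy construction of `S ⊆ O`, the set `O \ S` is a common
independent set of the contracted matroids, lies in the union of the spans of `C₁` and
`C₂`, and has size at most `rank_{M₁}(C₁) + rank_{M₂}(C₂)`. -/
theorem greedy_remainder_bound (M₁ M₂ : Matroid α) [M₁.Finite] (hE : M₁.E = M₂.E)
    (W C₁ C₂ : Set α) (hW : W ⊆ M₁.E) (hC : C₁ ∪ C₂ = W) (hdisj : Disjoint C₁ C₂)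
    (O : Set α) (hO₁ : M₁.Indep O) (hO₂ : M₂.Indep O)
    (hOmax : ∀ I ⊆ M₁.E, M₁.Indep I → M₂.Indep I → I.encard ≤ O.encard)
    (S : Set α) (hSO : S ⊆ O) (hSW : S ⊆ M₁.E \ W)
    (hmax : ∀ o ∈ O \ S,
      o ∈ (contract M₁ S).closure C₁ ∪ (contract M₂ S).closure C₂) :
    (contract M₁ S).Indep (O \ S) ∧ (contract M₂ S).Indep (O \ S) ∧
      O \ S ⊆ (contract M₁ S).closure C₁ ∪ (contract M₂ S).closure C₂ ∧
      (O \ S).encard ≤ er M₁ C₁ + er M₂ C₂ := by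
  have hOS₁ : M₁.Indep ((O \ S) ∪ S) := by rwa [diff_union_of_subset hSO]
  have hOS₂ : M₂.Indep ((O \ S) ∪ S) := by rwa [diff_union_of_subset hSO]
  have hdjS : Disjoint (O \ S) S := disjoint_sdiff_left
  have h₁ : (contract M₁ S).Indep (O \ S) := contract_indep_of hOS₁ hdjS
  have h₂ : (contract M₂ S).Indep (O \ S) := contract_indep_of hOS₂ hdjS
  refine ⟨h₁, h₂, hmax, ?_⟩
  set N₁ := contract M₁ S with hN₁
  set N₂ := contract M₂ S with hN₂
  set A := (O \ S) ∩ N₁.closure C₁ with hA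
  set B := (O \ S) \ N₁.closure C₁ with hB
  have hABunion : A ∪ B = O \ S := inter_union_diff _ _
  have hAcl : A ⊆ N₁.closure C₁ := inter_subset_right
  have hBcl : B ⊆ N₂.closure C₂ := by
    intro o ho
    rcases hmax o ho.1 with h | h
    · exact absurd h ho.2
    · exact h
  -- bound |A|
  obtain ⟨J₁, hJ₁⟩ := N₁.exists_isBasis' C₁
  have hAJ₁ : A ⊆ N₁.closure J₁ := hJ₁.closure_eq_closure ▸ hAcl
  have hAle : A.encard ≤ er M₁ C₁ := by
    refine (encard_le_of_indep_subset_closure (h₁.subset inter_subset_left)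
      hJ₁.indep hAJ₁).trans ?_
    exact encard_le_er (indep_of_contract_indep hJ₁.indep) hJ₁.subset
  -- bound |B|
  obtain ⟨J₂, hJ₂⟩ := N₂.exists_isBasis' C₂
  have hBJ₂ : B ⊆ N₂.closure J₂ := hJ₂.closure_eq_closure ▸ hBcl
  have hBle : B.encard ≤ er M₂ C₂ := by
    refine (encard_le_of_indep_subset_closure (h₂.subset (hABunion ▸ subset_union_right))
      hJ₂.indep hBJ₂).trans ?_
    exact encard_le_er (indep_of_contract_indep hJ₂.indep) hJ₂.subset
  calc (O \ S).encard = (A ∪ B).encard := by rw [hABunion]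
    _ ≤ A.encard + B.encard := Set.encard_union_le _ _
    _ ≤ er M₁ C₁ + er M₂ C₂ := add_le_add hAle hBle

end MatroidDCS
end
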